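/- arXiv:2409.03539 — 4 statements merged into one kernel-verified Lean document; each statement's English description precedes it below -/
import Mathlib

section
/- Let G be an abelian subgroup of the symmetric group S_n, and suppose G is isomorphic to a direct product C_{q_1} × ⋯ × C_{q_k} of cyclic groups where each q_i > 1 is a prime power. Then q_1 + ⋯ + q_k ≤ n. -/
/-!
Let `G` act on `Fin n`. For an orbit `O` with stabiliser `K`, the abelian group `G ⧸ K` has
order `|O|`, so by the structure theorem it embeds into a product of cyclic groups of prime-power
orders whose sum is at most `|O|` (numbers `≥ 2` have sum at most their product). As `G` is
abelian, `K` fixes `O` pointwise, so `G` embeds into the product of these over all orbits: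
`C_{s_1} × ⋯ × C_{s_m}` with prime powers `s_j` and `∑ s_j ≤ n`.

It remains to see that `C_{q_1} × ⋯ × C_{q_k} ↪ C_{s_1} × ⋯ × C_{s_m}` forces `∑ q_i ≤ ∑ s_j`.
In `A = ∏ C_{q_i}` the subgroup `A[p^t]` of elements killed by `p^t` has index
`p ^ #{i | p^(t+1) ∣ q_i}` in `A[p^(t+1)]`, and an injection can only increase this index, so
every `d > 1` divides at least as many `s_j` as `q_i`. Summing with the weights `w p = p`,
`w (p^k) = p^k - p^(k-1)` (`k ≥ 2`), for which `q = ∑_{1 < d ∣ q} w d` when `q` is a prime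
power, gives the claim.
-/

open Finset Function MulAction

universe u

local notation "C" q => Multiplicative (ZMod q)

theorem Nat.card_multiplicative_zmod (n : ℕ) : Nat.card (C n) = n :=
  (Nat.card_congr Multiplicative.toAdd).trans (Nat.card_zmod n)

theorem Nat.gcd_prime_pow_succ (q : ℕ) {p : ℕ} (hp : p.Prime) (t : ℕ) :
    q.gcd (p ^ (t + 1)) = q.gcd (p ^ t) * if p ^ (t + 1) ∣ q then p else 1 := by
  split_ifs with h
  · rw [Nat.gcd_eq_right h, Nat.gcd_eq_right ((pow_dvd_pow p t.le_succ).trans h), pow_succ]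
  · rw [mul_one]
    refine Nat.dvd_antisymm ?_ (Nat.gcd_dvd_gcd_of_dvd_right _ (pow_dvd_pow p t.le_succ))
    obtain ⟨j, hj, hgcd⟩ := (Nat.dvd_prime_pow hp).mp (Nat.gcd_dvd_right q (p ^ (t + 1)))
    have hjt : j ≠ t + 1 := by
      rintro rfl
      exact h (hgcd ▸ Nat.gcd_dvd_left _ _)
    rw [hgcd]
    exact Nat.dvd_gcd (hgcd ▸ Nat.gcd_dvd_left _ _) (pow_dvd_pow p (by omega))

section KerPow

variable {A B : Type*} [CommGroup A] [CommGroup B]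

theorem relIndex_ker_powMonoidHom_le_of_injective [Finite B] {f : A →* B} (hf : Injective f)
    (a b : ℕ) :
    (powMonoidHom a : A →* A).ker.relIndex (powMonoidHom b).ker ≤
      (powMonoidHom a : B →* B).ker.relIndex (powMonoidHom b).ker := by
  have hcomap (m : ℕ) : (powMonoidHom m : B →* B).ker.comap f = (powMonoidHom m).ker := by
    ext x
    simp only [Subgroup.mem_comap, MonoidHom.mem_ker, powMonoidHom_apply, ← map_pow]
    exact map_eq_one_iff f hf
  rw [← hcomap a, Subgroup.relIndex_comap]
  exact Subgroup.relIndex_le_of_le_right ((hcomap b).symm ▸ Subgroup.map_comap_le _ _)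
    Subgroup.index_ne_zero_of_finite

theorem card_ker_powMonoidHom_pi {ι : Type*} [Fintype ι] (M : ι → Type*) [∀ i, CommGroup (M i)]
    (m : ℕ) :
    Nat.card (powMonoidHom m : (Π i, M i) →* Π i, M i).ker =
      ∏ i, Nat.card (powMonoidHom m : M i →* M i).ker := by
  rw [← Nat.card_pi]
  refine Nat.card_congr ((Equiv.subtypeEquivRight fun x => ?_).trans Equiv.subtypePiEquivPi)
  simp only [MonoidHom.mem_ker, powMonoidHom_apply, funext_iff, Pi.pow_apply, Pi.one_apply]

end KerPow

variable {ι κ : Type*} [Fintype ι] [Fintype κ]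

theorem card_ker_powMonoidHom_pi_zmod (q : ι → ℕ) [∀ i, NeZero (q i)] (m : ℕ) :
    Nat.card (powMonoidHom m : (Π i, C (q i)) →* Π i, C (q i)).ker = ∏ i, (q i).gcd m := by
  rw [card_ker_powMonoidHom_pi]
  refine prod_congr rfl fun i _ => ?_
  rw [IsCyclic.card_powMonoidHom_ker, Nat.card_multiplicative_zmod]

theorem relIndex_ker_powMonoidHom_pi_zmod (q : ι → ℕ) [∀ i, NeZero (q i)] {p : ℕ} (hp : p.Prime)
    (t : ℕ) :
    (powMonoidHom (p ^ t) : (Π i, C (q i)) →* Π i, C (q i)).ker.relIndex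
      (powMonoidHom (p ^ (t + 1))).ker = p ^ #{i | p ^ (t + 1) ∣ q i} := by
  have hle : (powMonoidHom (p ^ t) : (Π i, C (q i)) →* Π i, C (q i)).ker ≤
      (powMonoidHom (p ^ (t + 1))).ker := by
    intro x hx
    rw [MonoidHom.mem_ker, powMonoidHom_apply] at hx ⊢
    rw [pow_succ, pow_mul, hx, one_pow]
  have hcard := Subgroup.relIndex_mul_relIndex _ _ _ bot_le hle
  simp only [Subgroup.relIndex_bot_left, card_ker_powMonoidHom_pi_zmod, Nat.gcd_prime_pow_succ _ hp,
    prod_mul_distrib, prod_ite, prod_const, one_pow, mul_one] at hcard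
  refine Nat.eq_of_mul_eq_mul_left (Finset.prod_pos fun i _ => ?_) hcard
  exact Nat.gcd_pos_of_pos_left _ (NeZero.pos _)

theorem card_filter_pow_dvd_le_of_injective {q : ι → ℕ} {s : κ → ℕ} [∀ i, NeZero (q i)]
    [∀ j, NeZero (s j)] {f : (Π i, C (q i)) →* Π j, C (s j)} (hf : Injective f) {p : ℕ}
    (hp : p.Prime) (t : ℕ) : #{i | p ^ (t + 1) ∣ q i} ≤ #{j | p ^ (t + 1) ∣ s j} := by
  have key := relIndex_ker_powMonoidHom_le_of_injective hf (p ^ t) (p ^ (t + 1))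
  rwa [relIndex_ker_powMonoidHom_pi_zmod q hp, relIndex_ker_powMonoidHom_pi_zmod s hp,
    Nat.pow_le_pow_iff_right hp.one_lt] at key

theorem card_filter_dvd_le_of_injective {q : ι → ℕ} {s : κ → ℕ} (hq : ∀ i, IsPrimePow (q i))
    [∀ j, NeZero (s j)] {f : (Π i, C (q i)) →* Π j, C (s j)} (hf : Injective f) {d : ℕ}
    (hd : d ≠ 1) : #{i | d ∣ q i} ≤ #{j | d ∣ s j} := by
  have : ∀ i, NeZero (q i) := fun i => ⟨(hq i).ne_zero⟩
  obtain h | ⟨i, hi⟩ := Finset.eq_empty_or_nonempty {i | d ∣ q i}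
  · simp [h]
  obtain ⟨p, e, hp, -, hpe⟩ := hq i
  rw [← Nat.prime_iff] at hp
  obtain ⟨_ | t, -, rfl⟩ := (Nat.dvd_prime_pow hp).mp (hpe ▸ (mem_filter.mp hi).2)
  · exact absurd (pow_zero p) hd
  · exact card_filter_pow_dvd_le_of_injective hf hp t

def divisorWeight (d : ℕ) : ℕ := Nat.totient d + if d.Prime then 1 else 0

theorem sum_divisorWeight_of_isPrimePow {q : ℕ} (hq : IsPrimePow q) :
    ∑ d ∈ q.divisors.erase 1, divisorWeight d = q := by
  have htot := Finset.add_sum_erase q.divisors Nat.totient (Nat.one_mem_divisors.mpr hq.ne_zero)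
  have hprimes : {d ∈ q.divisors.erase 1 | d.Prime} = q.primeFactors := by
    rw [Finset.filter_erase, Finset.erase_eq_of_notMem (by simp [Nat.not_prime_one]),
      Nat.primeFactors_eq_to_filter_divisors_prime]
  rw [Nat.sum_totient, Nat.totient_one] at htot
  simp only [divisorWeight, sum_add_distrib, ← sum_filter, sum_const, hprimes,
    isPrimePow_iff_card_primeFactors_eq_one.mp hq, smul_eq_mul, mul_one]
  omega

theorem sum_eq_sum_divisorWeight_mul_card {q : ι → ℕ} (hq : ∀ i, IsPrimePow (q i)) {N : ℕ}
    (hN : ∀ i, q i ≤ N) : ∑ i, q i = ∑ d ∈ Icc 2 N, divisorWeight d * #{i | d ∣ q i} := by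
  have hdiv (i : ι) : {d ∈ Icc 2 N | d ∣ q i} = (q i).divisors.erase 1 := by
    ext d
    simp only [mem_filter, mem_Icc, mem_erase, Nat.mem_divisors]
    have := (hq i).ne_zero
    constructor
    · rintro ⟨⟨h2, -⟩, hd⟩
      exact ⟨by omega, hd, this⟩
    · rintro ⟨h1, hd, -⟩
      have := Nat.pos_of_dvd_of_pos hd (Nat.pos_of_ne_zero this)
      exact ⟨⟨by omega, (Nat.le_of_dvd (by omega) hd).trans (hN i)⟩, hd⟩
  calc ∑ i, q i = ∑ i, ∑ d ∈ Icc 2 N with d ∣ q i, divisorWeight d := by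
        simp only [hdiv, sum_divisorWeight_of_isPrimePow (hq _)]
    _ = ∑ d ∈ Icc 2 N, divisorWeight d * #{i | d ∣ q i} := by
        simp only [sum_filter]
        rw [sum_comm]
        simp [sum_ite, mul_comm]

theorem sum_le_sum_of_injective {q : ι → ℕ} {s : κ → ℕ} (hq : ∀ i, IsPrimePow (q i))
    (hs : ∀ j, IsPrimePow (s j)) {f : (Π i, C (q i)) →* Π j, C (s j)} (hf : Injective f) :
    ∑ i, q i ≤ ∑ j, s j := by
  have : ∀ j, NeZero (s j) := fun j => ⟨(hs j).ne_zero⟩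
  set N := ∑ i, q i + ∑ j, s j
  rw [sum_eq_sum_divisorWeight_mul_card hq (N := N)
      fun i => (single_le_sum (by simp) (mem_univ i)).trans (Nat.le_add_right _ _),
    sum_eq_sum_divisorWeight_mul_card hs (N := N)
      fun j => (single_le_sum (by simp) (mem_univ j)).trans (Nat.le_add_left _ _)]
  gcongr with d hd
  exact card_filter_dvd_le_of_injective hq hf (by simp at hd; omega)

theorem Finset.sum_le_prod_of_two_le {ι : Type*} {s : Finset ι} {f : ι → ℕ}
    (hf : ∀ i ∈ s, 2 ≤ f i) : ∑ i ∈ s, f i ≤ ∏ i ∈ s, f i := by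
  classical
  induction s using Finset.induction_on with
  | empty => simp
  | insert a s ha ih =>
    rw [sum_insert ha, prod_insert ha]
    have ih := ih fun i hi => hf i (mem_insert_of_mem hi)
    have hfa := hf a (mem_insert_self a s)
    obtain rfl | ⟨i, hi⟩ := s.eq_empty_or_nonempty
    · simp
    · have h2 : 2 ≤ ∏ i ∈ s, f i :=
        (hf i (mem_insert_of_mem hi)).trans (single_le_prod' (fun j hj => by
          have := hf j (mem_insert_of_mem hj); omega) hi)
      nlinarith

theorem CommGroup.exists_injective_pi_zmod_isPrimePow (Q : Type*) [CommGroup Q] [Finite Q] :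
    ∃ (ι : Type) (_ : Fintype ι) (s : ι → ℕ) (f : Q →* Π i, C (s i)),
      (∀ i, IsPrimePow (s i)) ∧ Injective f ∧ ∑ i, s i ≤ Nat.card Q := by
  classical
  obtain ⟨ι, _, p, hp, e, ⟨φ⟩⟩ := AddCommGroup.equiv_directSum_zmod_of_finite (Additive Q)
  let ψ : Q ≃* Π i, C (p i ^ e i) := MulEquiv.toAdditive.symm <| φ.trans <|
    (DirectSum.addEquivProd _).trans (MulEquiv.piMultiplicative _).toAdditiveRight
  let res : (Π i, C (p i ^ e i)) →* Π i : {i // e i ≠ 0}, C (p i ^ e i) :=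
    MonoidHom.pi fun i => Pi.evalMonoidHom _ i.1
  have hres : Injective res := by
    intro x y hxy
    funext i
    by_cases hi : e i = 0
    · have : Subsingleton (C (p i ^ e i)) := by rw [hi, pow_zero]; infer_instance
      exact Subsingleton.elim _ _
    · exact congrFun hxy ⟨i, hi⟩
  refine ⟨{i // e i ≠ 0}, inferInstance, fun i => p i ^ e i, res.comp ψ.toMonoidHom,
    fun i => (hp i).isPrimePow.pow i.2, hres.comp ψ.injective, ?_⟩
  have hcard : Nat.card Q = ∏ i : {i // e i ≠ 0}, p i ^ e i := by
    rw [Nat.card_congr ψ.toEquiv, Nat.card_pi]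
    simp only [Nat.card_multiplicative_zmod]
    rw [← prod_filter_of_ne (p := fun i => e i ≠ 0)]
    · exact prod_subtype _ (by simp) _
    · intro i _ hi h0
      simp [h0] at hi
  rw [hcard]
  exact sum_le_prod_of_two_le fun i _ => ((hp i).isPrimePow.pow i.2).two_le

theorem exists_injective_pi_zmod_of_faithfulSMul (Γ : Type*) (α : Type u) [CommGroup Γ]
    [MulAction Γ α] [FaithfulSMul Γ α] [Finite α] :
    ∃ (T : Type u) (_ : Fintype T) (S : T → ℕ) (f : Γ →* Π x, C (S x)),
      (∀ x, IsPrimePow (S x)) ∧ Injective f ∧ ∑ x, S x ≤ Nat.card α := by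
  have : Finite Γ := Finite.of_injective _ (smul_left_injective' (M := Γ) (α := α))
  have : Fintype (orbitRel.Quotient Γ α) := Fintype.ofFinite _
  choose ι _ s f hs hf hsum using fun ω : orbitRel.Quotient Γ α =>
    CommGroup.exists_injective_pi_zmod_isPrimePow (Γ ⧸ stabilizer Γ ω.out)
  refine ⟨Σ ω, ι ω, inferInstance, fun x => s x.1 x.2,
    MonoidHom.pi fun x => (Pi.evalMonoidHom _ x.2).comp ((f x.1).comp (QuotientGroup.mk' _)),
    fun x => hs x.1 x.2, ?_, ?_⟩
  · rw [injective_iff_map_eq_one]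
    intro g hg
    have hstab (ω : orbitRel.Quotient Γ α) : g ∈ stabilizer Γ ω.out := by
      rw [← QuotientGroup.eq_one_iff, ← map_eq_one_iff _ (hf ω)]
      exact funext fun t => congrFun hg ⟨ω, t⟩
    refine eq_of_smul_eq_smul (α := α) fun a => ?_
    obtain ⟨h, ha⟩ : a ∈ orbit Γ (Quotient.mk'' a : orbitRel.Quotient Γ α).out := by
      rw [← orbitRel.Quotient.orbit_eq_orbit_out _ Quotient.out_eq']
      exact orbitRel.Quotient.mem_orbit.mpr rfl
    rw [one_smul, ← ha, smul_comm, mem_stabilizer_iff.mp (hstab _)]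
  · calc ∑ x : Σ ω, ι ω, s x.1 x.2 = ∑ ω, ∑ t, s ω t := Fintype.sum_sigma' s
      _ ≤ ∑ ω : orbitRel.Quotient Γ α, Nat.card (Γ ⧸ stabilizer Γ ω.out) :=
        sum_le_sum fun ω _ => hsum ω
      _ = Nat.card α := by
        rw [Nat.card_congr (selfEquivSigmaOrbitsQuotientStabilizer Γ α), Nat.card_sigma]

/-- If an abelian subgroup of `S_n` is isomorphic to a direct product
`C_{q_1} × ⋯ × C_{q_k}` of cyclic groups of prime-power orders `q_i > 1`, then
`q_1 + ⋯ + q_k ≤ n`. -/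
theorem sum_le_of_abelian_subgroup_perm
    {n : ℕ} (G : Subgroup (Equiv.Perm (Fin n)))
    (hab : ∀ a b : G, a * b = b * a)
    (k : ℕ) (q : Fin k → ℕ) (hq : ∀ i, IsPrimePow (q i))
    (e : G ≃* ((i : Fin k) → Multiplicative (ZMod (q i)))) :
    (∑ i, q i) ≤ n := by
  let : CommGroup G := { G.toGroup with mul_comm := hab }
  obtain ⟨T, _, S, f, hS, hf, hsum⟩ := exists_injective_pi_zmod_of_faithfulSMul G (Fin n)
  calc ∑ i, q i ≤ ∑ x, S x := sum_le_sum_of_injective hq hS (f := f.comp e.symm.toMonoidHom)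
        (hf.comp e.symm.injective)
    _ ≤ n := by simpa using hsum
end

section
/- Let G be an abelian subgroup of the symmetric group S_n, and suppose G is isomorphic to a direct product H_1 × ⋯ × H_k of k nontrivial groups. Then 2k ≤ n. -/
/-!
An abelian group `G` acting faithfully on a finite set embeds into the product, over the orbits,
of the quotients `G ⧸ Stab x`, because in an abelian group the stabilizer is constant along an
orbit. Hence `|G|` divides the product of the orbit sizes, and counting prime factors with
multiplicity, `Ω |G| ≤ ∑ Ω |orbit| ≤ ∑ |orbit| / 2 = n / 2`, since `2 ^ Ω m ≤ m`. On the other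
hand each nontrivial factor `H i` contributes at least one prime to `Ω |G| = ∑ Ω |H i|`.
-/

open ArithmeticFunction
open scoped ArithmeticFunction.Omega

namespace ArithmeticFunction

theorem cardFactors_finset_prod {ι : Type*} {s : Finset ι} {f : ι → ℕ}
    (h0 : ∏ i ∈ s, f i ≠ 0) : Ω (∏ i ∈ s, f i) = ∑ i ∈ s, Ω (f i) := by
  rw [Finset.prod_eq_multiset_prod] at h0 ⊢
  rw [cardFactors_multiset_prod h0, Multiset.map_map]
  rfl

theorem cardFactors_le_of_dvd {m n : ℕ} (hn : n ≠ 0) (h : m ∣ n) : Ω m ≤ Ω n := by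
  obtain ⟨c, rfl⟩ := h
  rw [cardFactors_mul (left_ne_zero_of_mul hn) (right_ne_zero_of_mul hn)]
  exact Nat.le_add_right _ _

theorem two_pow_cardFactors_le {n : ℕ} (hn : n ≠ 0) : 2 ^ Ω n ≤ n := by
  conv_rhs => rw [← Nat.prod_primeFactorsList hn]
  exact List.pow_card_le_prod _ _ fun p hp => (Nat.prime_of_mem_primeFactorsList hp).two_le

theorem two_mul_cardFactors_le {n : ℕ} (hn : n ≠ 0) : 2 * Ω n ≤ n := by
  refine le_trans ?_ (two_pow_cardFactors_le hn)
  rcases Nat.eq_zero_or_eq_succ_pred (Ω n) with h | h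
  · simp [h]
  · rw [h, pow_succ', Nat.mul_le_mul_left_iff two_pos]
    exact Nat.lt_two_pow_self

theorem card_le_cardFactors_prod {ι : Type*} {s : Finset ι} {f : ι → ℕ}
    (hf : ∀ i ∈ s, 2 ≤ f i) : s.card ≤ Ω (∏ i ∈ s, f i) := by
  rw [cardFactors_finset_prod
      (Finset.prod_ne_zero_iff.mpr fun i hi => (two_pos.trans_le (hf i hi)).ne'),
    Finset.card_eq_sum_ones]
  exact Finset.sum_le_sum fun i hi => cardFactors_pos_iff_one_lt.mpr (hf i hi)

theorem card_le_cardFactors_card_pi {ι : Type*} [Fintype ι] (H : ι → Type*)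
    [∀ i, Nontrivial (H i)] [Finite (∀ i, H i)] : Fintype.card ι ≤ Ω (Nat.card (∀ i, H i)) := by
  have (i : ι) : Finite (H i) := .of_surjective _ (Function.surjective_eval i)
  rw [Nat.card_pi]
  exact card_le_cardFactors_prod fun i _ => Finite.one_lt_card

end ArithmeticFunction

namespace MulAction

theorem sum_card_orbit_out (G X : Type*) [Group G] [MulAction G X] [Finite X]
    [Fintype (orbitRel.Quotient G X)] :
    ∑ ω : orbitRel.Quotient G X, Nat.card (orbit G ω.out) = Nat.card X := by
  rw [Nat.card_congr (selfEquivSigmaOrbits G X), Nat.card_sigma]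

theorem card_dvd_prod_card_orbit_out (G X : Type*) [CommGroup G] [MulAction G X]
    [FaithfulSMul G X] [Fintype (orbitRel.Quotient G X)] :
    Nat.card G ∣ ∏ ω : orbitRel.Quotient G X, Nat.card (orbit G ω.out) := by
  let φ : G →* ∀ ω : orbitRel.Quotient G X, G ⧸ stabilizer G ω.out :=
    MonoidHom.pi fun ω => QuotientGroup.mk' _
  have hφ : Function.Injective φ := by
    refine (injective_iff_map_eq_one φ).mpr fun g hg => eq_of_smul_eq_smul (α := X) fun x => ?_
    obtain ⟨h, hx⟩ : (⟦x⟧ : orbitRel.Quotient G X).out ∈ orbit G x :=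
      orbitRel_apply.mp (Quotient.mk_out (s := orbitRel G X) x)
    have hg : g ∈ stabilizer G (⟦x⟧ : orbitRel.Quotient G X).out :=
      (QuotientGroup.eq_one_iff g).mp (congrFun hg _)
    rw [← hx, stabilizer_smul_eq_right] at hg
    rw [one_smul]
    exact hg
  have hcard (ω : orbitRel.Quotient G X) :
      Nat.card (G ⧸ stabilizer G ω.out) = Nat.card (orbit G ω.out) :=
    Nat.card_congr (orbitEquivQuotientStabilizer G ω.out).symm
  simpa only [Nat.card_pi, hcard] using Subgroup.card_dvd_of_injective φ hφ

theorem two_mul_cardFactors_card_le_card (G X : Type*) [CommGroup G] [MulAction G X]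
    [FaithfulSMul G X] [Finite X] : 2 * Ω (Nat.card G) ≤ Nat.card X := by
  have := Fintype.ofFinite (orbitRel.Quotient G X)
  have horbit (ω : orbitRel.Quotient G X) : Nat.card (orbit G ω.out) ≠ 0 :=
    have := (nonempty_orbit (M := G) ω.out).to_subtype
    Nat.card_pos.ne'
  have hprod : ∏ ω : orbitRel.Quotient G X, Nat.card (orbit G ω.out) ≠ 0 :=
    Finset.prod_ne_zero_iff.mpr fun ω _ => horbit ω
  calc 2 * Ω (Nat.card G)
      ≤ 2 * Ω (∏ ω : orbitRel.Quotient G X, Nat.card (orbit G ω.out)) := by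
        gcongr
        exact cardFactors_le_of_dvd hprod (card_dvd_prod_card_orbit_out G X)
    _ = ∑ ω : orbitRel.Quotient G X, 2 * Ω (Nat.card (orbit G ω.out)) := by
        rw [cardFactors_finset_prod hprod, Finset.mul_sum]
    _ ≤ ∑ ω : orbitRel.Quotient G X, Nat.card (orbit G ω.out) :=
        Finset.sum_le_sum fun ω _ => two_mul_cardFactors_le (horbit ω)
    _ = Nat.card X := sum_card_orbit_out G X

end MulAction

/-- An abelian subgroup of `S_n` which is isomorphic to a direct product of `k`
nontrivial groups satisfies `2k ≤ n`. -/
theorem two_mul_le_of_abelian_subgroup_perm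
    {n : ℕ} (G : Subgroup (Equiv.Perm (Fin n)))
    (hab : ∀ a b : G, a * b = b * a)
    (k : ℕ) (H : Fin k → Type*) [∀ i, Group (H i)] [∀ i, Nontrivial (H i)]
    (e : G ≃* ((i : Fin k) → H i)) :
    2 * k ≤ n := by
  let : CommGroup G := { G.toGroup with mul_comm := hab }
  have : Finite ((i : Fin k) → H i) := .of_equiv G e.toEquiv
  calc 2 * k = 2 * Fintype.card (Fin k) := by rw [Fintype.card_fin]
    _ ≤ 2 * Ω (Nat.card ((i : Fin k) → H i)) := by
        gcongr
        exact card_le_cardFactors_card_pi H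
    _ = 2 * Ω (Nat.card G) := by rw [Nat.card_congr e.toEquiv]
    _ ≤ Nat.card (Fin n) := MulAction.two_mul_cardFactors_card_le_card G (Fin n)
    _ = n := Nat.card_fin n
end

section
/- No finite 2-group has exactly 3 rational irreducible complex characters. -/
/-!
A homomorphism `G →* ℤˣ` is a one-dimensional, hence irreducible, rational character, and these
homomorphisms form an elementary abelian 2-group; so three rational irreducible characters leave
room for at most two of them. In a finite 2-group every maximal subgroup is normal of index 2,
i.e. the kernel of such a homomorphism, so `G` has at most one maximal subgroup and is cyclic.
For abelian `G`, Schur's lemma makes every irreducible character a homomorphism to the roots of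
unity in `ℂ`, and a rational one takes values `±1`; so the rational irreducible characters are
exactly the homomorphisms `G →* ℤˣ`, whose number is a power of 2, never 3.
-/

open CategoryTheory

/-- `χ : G → ℂ` is the character of an irreducible complex representation of `G`. -/
def IsIrrChar (G : Type) [Group G] (χ : G → ℂ) : Prop :=
  ∃ V : FDRep ℂ G, Simple V ∧ ∀ g : G, V.character g = χ g

/-- An element is rational if every irreducible complex character takes a rational
value on it. -/
def IsRatElem {G : Type} [Group G] (x : G) : Prop :=
  ∀ χ : G → ℂ, IsIrrChar G χ → ∃ q : ℚ, χ x = (q : ℂ)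

/-- A conjugacy class is rational if (each) of its elements is rational. -/
def IsRatClass {G : Type} [Group G] (c : ConjClasses G) : Prop :=
  ∀ x ∈ c.carrier, IsRatElem x

/-- A character is rational if all of its values are rational. -/
def IsRatChar {G : Type} [Group G] (χ : G → ℂ) : Prop :=
  ∀ g : G, ∃ q : ℚ, χ g = (q : ℂ)

open Module Subgroup

universe u

theorem isCyclic_of_forall_isCoatom_eq {G : Type*} [Group G] [IsCoatomic (Subgroup G)]
    (h : ∀ M N : Subgroup G, IsCoatom M → IsCoatom N → M = N) : IsCyclic G := by
  rw [isCyclic_iff_exists_zpowers_eq_top]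
  by_contra! hne
  obtain ⟨M, hM, -⟩ := (eq_top_or_exists_le_coatom (zpowers (1 : G))).resolve_left (hne 1)
  refine hM.1 (eq_top_iff' M |>.mpr fun x => ?_)
  obtain ⟨N, hN, hxN⟩ := (eq_top_or_exists_le_coatom (zpowers x)).resolve_left (hne x)
  exact h N M hN hM ▸ hxN (mem_zpowers x)

theorem IsPGroup.normal_of_isCoatom {p : ℕ} [Fact p.Prime] {G : Type*} [Group G] [Finite G]
    (hG : IsPGroup p G) {M : Subgroup G} (hM : IsCoatom M) : M.Normal :=
  (Group.isNilpotent_of_finite_tfae.out 0 2 rfl rfl).mp hG.isNilpotent M hM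

theorem IsPGroup.card_quotient_eq_of_isCoatom {p : ℕ} [Fact p.Prime] {G : Type*} [Group G]
    [Finite G] (hG : IsPGroup p G) {M : Subgroup G} [M.Normal] (hM : IsCoatom M) :
    Nat.card (G ⧸ M) = p := by
  have : Nontrivial (G ⧸ M) := QuotientGroup.nontrivial_iff.mpr hM.1
  obtain ⟨n, hn, hcard⟩ := ((hG.to_quotient M).nontrivial_iff_card).mp this
  obtain ⟨y, hy⟩ := exists_prime_orderOf_dvd_card' p (hcard ▸ dvd_pow_self p hn.ne')
  obtain ⟨x, rfl⟩ := QuotientGroup.mk_surjective y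
  have hxM : M < (zpowers (x : G ⧸ M)).comap (QuotientGroup.mk' M) := by
    refine SetLike.lt_iff_le_and_exists.mpr ⟨fun m hm => ?_, x, mem_zpowers _, fun hx => ?_⟩
    · simp [(QuotientGroup.eq_one_iff m).mpr hm]
    · rw [← QuotientGroup.eq_one_iff, ← orderOf_eq_one_iff, hy] at hx
      exact (Fact.out : p.Prime).one_lt.ne' hx
  have htop : zpowers (x : G ⧸ M) = ⊤ := by
    refine eq_top_iff' _ |>.mpr fun q => ?_
    obtain ⟨g, rfl⟩ := QuotientGroup.mk_surjective q
    exact (hM.lt_iff.mp hxM ▸ mem_top g : g ∈ (zpowers (x : G ⧸ M)).comap (QuotientGroup.mk' M))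
  rw [← hy, ← Nat.card_zpowers, htop, card_top]

theorem IsPGroup.exists_ker_eq_of_isCoatom {G : Type*} [Group G] [Finite G] (hG : IsPGroup 2 G)
    {M : Subgroup G} (hM : IsCoatom M) : ∃ φ : G →* ℤˣ, φ.ker = M := by
  have := hG.normal_of_isCoatom hM
  have : Fact (Nat.Prime 2) := ⟨Nat.prime_two⟩
  let e : G ⧸ M ≃* ℤˣ := mulEquivOfPrimeCardEq (hG.card_quotient_eq_of_isCoatom hM)
    (Nat.card_eq_fintype_card.trans Fintype.card_units_int)
  refine ⟨(e : G ⧸ M →* ℤˣ).comp (QuotientGroup.mk' M), ?_⟩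
  rw [← MonoidHom.comap_ker, MonoidHom.ker_eq_bot _ e.injective, MonoidHom.comap_bot,
    QuotientGroup.ker_mk']

theorem IsPGroup.isCyclic_of_card_monoidHom_le_two {G : Type*} [Group G] [Finite G]
    (hG : IsPGroup 2 G) (h : Nat.card (G →* ℤˣ) ≤ 2) : IsCyclic G := by
  refine isCyclic_of_forall_isCoatom_eq fun M N hM hN => ?_
  by_contra hMN
  obtain ⟨φ, rfl⟩ := hG.exists_ker_eq_of_isCoatom hM
  obtain ⟨ψ, rfl⟩ := hG.exists_ker_eq_of_isCoatom hN
  have h1φ : (1 : G →* ℤˣ) ≠ φ := fun h1 => hM.1 (h1 ▸ MonoidHom.ker_one)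
  have h1ψ : (1 : G →* ℤˣ) ≠ ψ := fun h1 => hN.1 (h1 ▸ MonoidHom.ker_one)
  have hφψ : φ ≠ ψ := fun h => hMN (h ▸ rfl)
  classical
  have := Fintype.ofFinite (G →* ℤˣ)
  have h3 : ({1, φ, ψ} : Finset (G →* ℤˣ)).card = 3 :=
    Finset.card_eq_three.mpr ⟨1, φ, ψ, h1φ, h1ψ, hφψ, rfl⟩
  have := h3 ▸ Finset.card_le_univ {1, φ, ψ}
  rw [Nat.card_eq_fintype_card] at h
  omega

namespace FDRep

variable {k G : Type u} [Field k] [Group G]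

noncomputable def ofLinearChar (ψ : G →* k) : FDRep k G :=
  FDRep.of ((Algebra.lsmul k (A := k) k k).toMonoidHom.comp ψ)

theorem ofLinearChar_ρ (ψ : G →* k) (g : G) : (ofLinearChar ψ).ρ g = ψ g • 1 := by
  ext
  rfl

@[simp]
theorem ofLinearChar_character (ψ : G →* k) (g : G) : (ofLinearChar ψ).character g = ψ g := by
  have h1 : finrank k (ofLinearChar ψ) = 1 := finrank_self k
  rw [FDRep.character, ofLinearChar_ρ, map_smul, Module.End.one_eq_id, LinearMap.trace_id, h1,
    Nat.cast_one, smul_eq_mul, mul_one]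

instance simple_ofLinearChar [IsAlgClosed k] [CharZero k] [Fintype G] (ψ : G →* k) :
    Simple (ofLinearChar ψ) := by
  rw [simple_iff_char_is_norm_one]
  simp only [ofLinearChar_character, ← map_mul, mul_inv_cancel, map_one, Finset.sum_const,
    Finset.card_univ, Nat.card_eq_fintype_card, nsmul_one]

section Commutative

variable [IsAlgClosed k] [IsMulCommutative G] (V : FDRep k G) [Simple V]

theorem exists_ρ_eq_smul_one (g : G) : ∃ c : k, V.ρ g = c • 1 := by
  let f : V ⟶ V := ⟨FGModuleCat.ofHom (V.ρ g), fun h => by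
    ext x
    change V.ρ g (V.ρ h x) = V.ρ h (V.ρ g x)
    rw [← Module.End.mul_apply, ← map_mul, mul_comm', map_mul, Module.End.mul_apply]⟩
  obtain ⟨c, hc⟩ := (finrank_eq_one_iff_of_nonzero' (𝟙 V) (id_nonzero V)).mp
    (finrank_endomorphism_simple_eq_one k V) f
  exact ⟨c, congrArg (fun f : V ⟶ V => f.hom.hom.hom) hc |>.symm⟩

theorem finrank_eq_one_of_isMulCommutative [CharZero k] [Fintype G] : finrank k V = 1 := by
  -- With `ρ g = c g • 1`, the norm-one criterion for simplicity reads `|G| d² = |G|`.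
  choose c hc using V.exists_ρ_eq_smul_one
  set d := finrank k V
  have hchar (g : G) : V.character g = c g * d := by
    rw [FDRep.character, hc, map_smul, Module.End.one_eq_id, LinearMap.trace_id, smul_eq_mul]
  have hnorm := (simple_iff_char_is_norm_one V).mp inferInstance
  simp only [hchar, mul_mul_mul_comm, ← Finset.sum_mul] at hnorm
  have hd : d ≠ 0 := by
    rintro hd
    simp only [hd, CharP.cast_eq_zero, mul_zero] at hnorm
    exact (Nat.cast_ne_zero.mpr Nat.card_pos.ne') hnorm.symm
  have : Nontrivial V := nontrivial_of_finrank_pos (Nat.pos_of_ne_zero hd)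
  have hc1 (g : G) : c g * c g⁻¹ = 1 := by
    apply smul_left_injective k (one_ne_zero (α := Module.End k V))
    calc (c g * c g⁻¹) • (1 : Module.End k V) = (c g • 1) * (c g⁻¹ • 1) := by
          rw [smul_mul_smul, one_mul]
      _ = (1 : k) • 1 := by rw [← hc, ← hc, ← map_mul, mul_inv_cancel, map_one, one_smul]
  simp only [hc1, Finset.sum_const, Finset.card_univ, nsmul_one, Nat.card_eq_fintype_card] at hnorm
  have hdd : (d : k) * d = 1 := (mul_eq_left₀ (Nat.cast_ne_zero.mpr Fintype.card_ne_zero)).mp hnorm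
  exact Nat.eq_one_of_mul_eq_one_right (by exact_mod_cast hdd)

theorem ρ_eq_character_smul_one [CharZero k] [Fintype G] (g : G) :
    V.ρ g = V.character g • 1 := by
  obtain ⟨c, hc⟩ := V.exists_ρ_eq_smul_one g
  rw [FDRep.character, hc, map_smul, Module.End.one_eq_id, LinearMap.trace_id,
    V.finrank_eq_one_of_isMulCommutative, Nat.cast_one, smul_eq_mul, mul_one]

theorem character_mul_of_isMulCommutative [CharZero k] [Fintype G] (g h : G) :
    V.character (g * h) = V.character g * V.character h := by
  have : Nontrivial V := nontrivial_of_finrank_eq_succ V.finrank_eq_one_of_isMulCommutative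
  apply smul_left_injective k (one_ne_zero (α := Module.End k V))
  calc V.character (g * h) • (1 : Module.End k V) = V.ρ g * V.ρ h := by
        rw [← map_mul, ρ_eq_character_smul_one]
    _ = (V.character g * V.character h) • 1 := by
        rw [ρ_eq_character_smul_one, ρ_eq_character_smul_one, smul_mul_smul, one_mul]

@[simps]
noncomputable def characterMonoidHom [CharZero k] [Fintype G] : G →* k where
  toFun := V.character
  map_one' := by rw [char_one, V.finrank_eq_one_of_isMulCommutative, Nat.cast_one]
  map_mul' := V.character_mul_of_isMulCommutative

end Commutative

end FDRep

theorem MonoidHom.exists_comp_eq_of_injective {M N P : Type*} [MulOneClass M] [MulOneClass N]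
    [MulOneClass P] {ι : M →* N} (hι : Function.Injective ι) (ψ : P →* N)
    (h : ∀ x, ψ x ∈ Set.range ι) : ∃ φ : P →* M, ι.comp φ = ψ := by
  choose f hf using h
  refine ⟨{ toFun := f, map_one' := hι ?_, map_mul' := fun x y => hι ?_ }, MonoidHom.ext hf⟩
  · rw [hf, map_one, map_one]
  · rw [hf, map_mul, map_mul, hf, hf]

def intUnitsToComplex : ℤˣ →* ℂ := (Int.castRingHom ℂ : ℤ →* ℂ).comp (Units.coeHom ℤ)

theorem intUnitsToComplex_injective : Function.Injective intUnitsToComplex :=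
  fun _ _ h => Units.ext (Int.cast_injective h)

theorem isPGroup_monoidHom_units_int (G : Type*) [Group G] : IsPGroup 2 (G →* ℤˣ) :=
  fun φ => ⟨1, MonoidHom.ext fun g => Int.units_sq (φ g)⟩

section RationalCharacters

variable {G : Type} [Group G] [Fintype G]

theorem isIrrChar_monoidHom (ψ : G →* ℂ) : IsIrrChar G ψ :=
  ⟨FDRep.ofLinearChar ψ, inferInstance, FDRep.ofLinearChar_character ψ⟩

def ratIrrCharOfMonoidHom (φ : G →* ℤˣ) : {χ : G → ℂ // IsIrrChar G χ ∧ IsRatChar χ} :=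
  ⟨intUnitsToComplex.comp φ, isIrrChar_monoidHom _,
    fun g => ⟨(φ g : ℤ), by simp [intUnitsToComplex]⟩⟩

theorem ratIrrCharOfMonoidHom_injective : Function.Injective (ratIrrCharOfMonoidHom (G := G)) :=
  fun _ _ h => MonoidHom.ext fun g =>
    intUnitsToComplex_injective (congrFun (congrArg Subtype.val h) g)

theorem ratIrrCharOfMonoidHom_surjective [IsMulCommutative G] :
    Function.Surjective (ratIrrCharOfMonoidHom (G := G)) := by
  rintro ⟨χ, ⟨V, hV, hVχ⟩, hrat⟩
  have hψ : ∀ g, V.characterMonoidHom g ∈ Set.range intUnitsToComplex := by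
    intro g
    obtain ⟨q, hq⟩ := hrat g
    have hpow : q ^ Fintype.card G = 1 := by
      have := congrArg V.characterMonoidHom (pow_card_eq_one (x := g))
      rw [map_pow, map_one, FDRep.characterMonoidHom_apply, hVχ, hq] at this
      exact_mod_cast this
    rcases (pow_eq_one_iff_of_ne_zero Fintype.card_ne_zero).mp hpow with h | ⟨h, -⟩
    · exact ⟨1, by simp [intUnitsToComplex, hVχ, hq, h]⟩
    · exact ⟨-1, by simp [intUnitsToComplex, hVχ, hq, h]⟩
  obtain ⟨φ, hφ⟩ := MonoidHom.exists_comp_eq_of_injective intUnitsToComplex_injective _ hψ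
  exact ⟨φ, Subtype.ext (funext fun g => (congrArg (· g) hφ).trans (hVχ g))⟩

end RationalCharacters

/-- No finite 2-group has exactly 3 rational irreducible complex characters. -/
theorem two_group_not_three_rational_chars
    {G : Type} [Group G] [Fintype G]
    (h2 : ∃ m : ℕ, Nat.card G = 2 ^ m) :
    Nat.card {χ : G → ℂ // IsIrrChar G χ ∧ IsRatChar χ} ≠ 3 := by
  intro h3
  have : Finite {χ : G → ℂ // IsIrrChar G χ ∧ IsRatChar χ} :=
    Nat.finite_of_card_ne_zero (by omega)
  have hhom3 : Nat.card (G →* ℤˣ) ≤ 3 :=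
    h3 ▸ Nat.card_le_card_of_injective _ ratIrrCharOfMonoidHom_injective
  have hhom_ne3 : Nat.card (G →* ℤˣ) ≠ 3 := by
    obtain ⟨k, hk⟩ := IsPGroup.iff_card.mp (isPGroup_monoidHom_units_int G)
    rw [hk]
    intro h
    have := Nat.prime_three.dvd_of_dvd_pow (show 3 ∣ 2 ^ k from h ▸ dvd_rfl)
    omega
  obtain ⟨m, hm⟩ := h2
  have : IsCyclic G := (IsPGroup.of_card hm).isCyclic_of_card_monoidHom_le_two (by omega)
  have := Nat.card_eq_of_bijective _
    ⟨ratIrrCharOfMonoidHom_injective (G := G), ratIrrCharOfMonoidHom_surjective⟩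
  omega
end

section
/- For every integer n ≥ 2, the generalized quaternion group of order 2^{n+1} has exactly 5 rational conjugacy classes. -/
open CategoryTheory

/-! An element `x` whose square `z` is central and which is conjugate to `x z` is rational: on
an irreducible representation `z` acts by a scalar `c` (Schur), so `χ x = χ (x z) = c χ x`, and
either `χ x = 0`, or `c = 1` and `ρ x` is an involution, whose trace is an integer. In
`QuaternionGroup m` with `m = 2 ^ (n - 1)` this covers every `xa i` and every `a i` with
`4 i = 0`. At any other `a i` the two-dimensional irreducible representation has trace
`ζ + ζ⁻¹`, where `ζ` is a root of unity of order `2 ^ t ≥ 8`, and this is irrational. The rational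
classes are therefore those of `1`, `a (m / 2)`, `a m`, `xa 0` and `xa 1`. -/

namespace FDRep

variable {k G : Type} [Field k] [Group G]

noncomputable def centralEnd (V : FDRep k G) {z : G} (hz : ∀ g, Commute z g) : V ⟶ V where
  hom := FGModuleCat.ofHom (V.ρ z)
  comm g := by
    apply FGModuleCat.hom_ext
    show V.ρ z * V.ρ g = V.ρ g * V.ρ z
    rw [← map_mul, ← map_mul, (hz g).eq]

lemma exists_ρ_eq_smul_one_of_commute [IsAlgClosed k] (V : FDRep k G) [Simple V] {z : G}
    (hz : ∀ g, Commute z g) : ∃ c : k, V.ρ z = c • 1 := by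
  obtain ⟨c, hc⟩ := endomorphism_simple_eq_smul_id k (centralEnd V hz)
  refine ⟨c, ?_⟩
  have := congrArg Action.Hom.hom hc.symm
  rw [Action.smul_hom] at this
  exact congrArg (fun f => f.hom.hom) this

end FDRep

lemma LinearMap.exists_trace_eq_intCast_of_mul_self_eq_one {k V : Type*} [Field k]
    [AddCommGroup V] [Module k V] [FiniteDimensional k V] (h2 : (2 : k) ≠ 0)
    {f : Module.End k V} (hf : f * f = 1) : ∃ z : ℤ, LinearMap.trace k V f = z := by
  set p : Module.End k V := (2⁻¹ : k) • (1 + f) with hp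
  have hpp : IsIdempotentElem p := by
    have hsq : (1 + f) * (1 + f) = (2 : k) • (1 + f) := by
      simp only [add_mul, mul_add, hf, one_mul, mul_one, two_smul]; abel
    rw [IsIdempotentElem, hp, smul_mul_smul, hsq, smul_smul, mul_assoc, inv_mul_cancel₀ h2,
      mul_one]
  obtain ⟨P, hP⟩ := (LinearMap.isProj_iff_isIdempotentElem p).mpr hpp
  have hf' : f = (2 : k) • p - 1 := by
    rw [hp, smul_smul, mul_inv_cancel₀ h2, one_smul, add_sub_cancel_left]
  refine ⟨2 * Module.finrank k P - Module.finrank k V, ?_⟩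
  rw [hf', map_sub, map_smul, hP.trace, LinearMap.trace_one, smul_eq_mul]
  push_cast
  ring

section Rationality

variable {G : Type} [Group G]

lemma IsRatElem.of_isConj {x y : G} (hx : IsRatElem x) (h : IsConj x y) : IsRatElem y := by
  rintro χ ⟨V, hV, hVχ⟩
  obtain ⟨g, rfl⟩ := isConj_iff.mp h
  rw [← hVχ, FDRep.char_conj, hVχ]
  exact hx χ ⟨V, hV, hVχ⟩

lemma isRatClass_mk_iff {x : G} : IsRatClass (ConjClasses.mk x) ↔ IsRatElem x := by
  refine ⟨fun h => h x ConjClasses.mem_carrier_mk, fun hx y hy => hx.of_isConj ?_⟩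
  rw [ConjClasses.mem_carrier_iff_mk_eq, ConjClasses.mk_eq_mk_iff_isConj] at hy
  exact hy.symm

theorem isRatElem_of_mul_self_eq_central {x z : G} (hz : ∀ g, Commute z g) (hxz : x * x = z)
    (hconj : IsConj x (x * z)) : IsRatElem x := by
  rintro χ ⟨V, hV, hVχ⟩
  obtain ⟨c, hc⟩ := V.exists_ρ_eq_smul_one_of_commute hz
  have hχ : V.character x = c * V.character x := by
    obtain ⟨g, hg⟩ := isConj_iff.mp hconj
    calc V.character x = V.character (x * z) := by rw [← hg, FDRep.char_conj]
      _ = c * V.character x := by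
        rw [FDRep.character, map_mul, hc, mul_smul_comm, mul_one, map_smul, smul_eq_mul]
        rfl
  by_cases hc1 : c = 1
  · have hinv : V.ρ x * V.ρ x = 1 := by rw [← map_mul, hxz, hc, hc1, one_smul]
    obtain ⟨k, hk⟩ := LinearMap.exists_trace_eq_intCast_of_mul_self_eq_one two_ne_zero hinv
    exact ⟨k, by rw [← hVχ, FDRep.character, hk, Rat.cast_intCast]⟩
  · have h0 : V.character x = 0 := by
      have : (1 - c) * V.character x = 0 := by linear_combination hχ
      exact (mul_eq_zero.mp this).resolve_left (sub_ne_zero.mpr (Ne.symm hc1))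
    exact ⟨0, by rw [← hVχ, h0, Rat.cast_zero]⟩

end Rationality

lemma Nat.two_lt_totient_of_dvd_two_pow {k n : ℕ} (hk : k ∣ 2 ^ n) (h4 : ¬ k ∣ 4) :
    2 < k.totient := by
  obtain ⟨t, -, rfl⟩ := (Nat.dvd_prime_pow Nat.prime_two).mp hk
  have ht : 3 ≤ t := by
    by_contra! ht
    exact h4 (pow_dvd_pow 2 (by omega : t ≤ 2))
  have : 2 ^ 2 ≤ 2 ^ (t - 1) := Nat.pow_le_pow_right two_pos (by omega)
  rw [Nat.totient_prime_pow Nat.prime_two (by omega)]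
  omega

open Polynomial in
/-- `ω` is a root of `X² - q X + 1`, while its minimal polynomial over `ℚ` has degree
`φ k > 2`. -/
lemma IsPrimitiveRoot.add_inv_ne_ratCast {K : Type*} [Field K] [CharZero K] {ω : K} {k : ℕ}
    (hω : IsPrimitiveRoot ω k) (hk : 2 < k.totient) (q : ℚ) : ω + ω⁻¹ ≠ q := by
  intro hq
  have hk0 : 0 < k := Nat.pos_of_ne_zero fun h => by simp [h] at hk
  have hω0 : ω ≠ 0 := hω.ne_zero hk0.ne'
  set p : ℚ[X] := X ^ 2 - C q * X + 1
  have hp : aeval ω p = 0 := by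
    have : ω * (ω + ω⁻¹) = ω * q := by rw [hq]
    rw [mul_add, mul_inv_cancel₀ hω0] at this
    simp only [p, map_add, map_sub, map_mul, map_pow, aeval_X, aeval_C, map_one,
      eq_ratCast (algebraMap ℚ K)]
    linear_combination this
  have hp0 : p ≠ 0 := by
    intro h
    simpa [p, coeff_one] using congrArg (coeff · 2) h
  have hdeg := natDegree_le_of_dvd (minpoly.dvd ℚ ω hp) hp0
  rw [← cyclotomic_eq_minpoly_rat hω hk0, natDegree_cyclotomic] at hdeg
  have : p.natDegree ≤ 2 := by simp only [p]; compute_degree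
  omega

namespace ZMod

lemma natCast_add_natCast_self (m : ℕ) : (m : ZMod (2 * m)) + m = 0 := by
  simpa [two_mul] using natCast_self (2 * m)

lemma natCast_ne_zero_of_lt {N k : ℕ} (hk0 : k ≠ 0) (hk : k < N) : (k : ZMod N) ≠ 0 := by
  rw [Ne, natCast_eq_zero_iff]
  exact fun h => (Nat.le_of_dvd (Nat.pos_of_ne_zero hk0) h).not_gt hk

lemma one_ne_two_mul {N : ℕ} (x : ZMod (2 * N)) : 1 ≠ 2 * x := fun h => by
  have := congrArg (castHom (dvd_mul_right 2 N) (ZMod 2)) h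
  rw [map_one, map_mul, map_ofNat, show (2 : ZMod 2) = 0 from rfl, zero_mul] at this
  exact one_ne_zero this

lemma exists_eq_two_mul_or_eq_two_mul_add_one {N : ℕ} (i : ZMod (2 * N)) :
    ∃ j, i = 2 * j ∨ i = 2 * j + 1 := by
  obtain ⟨k, hk | hk⟩ := Int.even_or_odd' (i.cast : ℤ)
  all_goals
    refine ⟨k, ?_⟩
    rw [← intCast_zmod_cast i, hk]
    push_cast
  exacts [.inl rfl, .inr rfl]

section StdAddChar

variable {N : ℕ} [NeZero N]

lemma stdAddChar_eq_one_iff {x : ZMod N} : (stdAddChar x : ℂ) = 1 ↔ x = 0 := by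
  rw [← AddChar.map_zero_eq_one (stdAddChar (N := N)), injective_stdAddChar.eq_iff]

lemma orderOf_stdAddChar_dvd_iff {x : ZMod N} {k : ℕ} :
    orderOf (stdAddChar x : ℂ) ∣ k ↔ (k : ZMod N) * x = 0 := by
  rw [orderOf_dvd_iff_pow_eq_one, ← AddChar.map_nsmul_eq_pow, stdAddChar_eq_one_iff, nsmul_eq_mul]

lemma stdAddChar_natCast_self (m : ℕ) [NeZero m] : (stdAddChar (m : ZMod (2 * m)) : ℂ) = -1 := by
  have hsq : (stdAddChar (m : ZMod (2 * m)) : ℂ) * stdAddChar (m : ZMod (2 * m)) = 1 := by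
    rw [← AddChar.map_add_eq_mul, natCast_add_natCast_self, AddChar.map_zero_eq_one]
  have hne : (stdAddChar (m : ZMod (2 * m)) : ℂ) ≠ 1 := by
    rw [Ne, stdAddChar_eq_one_iff]
    exact natCast_ne_zero_of_lt (NeZero.ne m) (by have := NeZero.ne m; omega)
  exact (mul_self_eq_one_iff.mp hsq).resolve_left hne

end StdAddChar

end ZMod

namespace QuaternionGroup

variable {m : ℕ}

lemma inv_a (i : ZMod (2 * m)) : (a i)⁻¹ = a (-i) :=
  inv_eq_of_mul_eq_one_right (by rw [a_mul_a, add_neg_cancel, a_zero])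

lemma inv_xa (i : ZMod (2 * m)) : (xa i)⁻¹ = xa ((m : ZMod (2 * m)) + i) :=
  inv_eq_of_mul_eq_one_right <| by
    rw [xa_mul_xa, ← a_zero]
    congr 1
    linear_combination ZMod.natCast_add_natCast_self m

lemma isConj_a_iff {i : ZMod (2 * m)} {g : QuaternionGroup m} :
    IsConj (a i) g ↔ g = a i ∨ g = a (-i) := by
  have hm := ZMod.natCast_add_natCast_self m
  refine ⟨fun h => ?_, ?_⟩
  · obtain ⟨c, rfl⟩ := isConj_iff.mp h
    rcases c with j | j
    · left
      rw [inv_a, a_mul_a, a_mul_a]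
      congr 1; ring
    · right
      rw [inv_xa, xa_mul_a, xa_mul_xa]
      congr 1; linear_combination hm
  · rintro (rfl | rfl)
    · exact IsConj.refl _
    · refine isConj_iff.mpr ⟨xa 0, ?_⟩
      rw [inv_xa, xa_mul_a, xa_mul_xa]
      congr 1; linear_combination hm

lemma isConj_xa_iff {i : ZMod (2 * m)} {g : QuaternionGroup m} :
    IsConj (xa i) g ↔ ∃ j, g = xa (i + 2 * j) := by
  refine ⟨fun h => ?_, ?_⟩
  · obtain ⟨c, rfl⟩ := isConj_iff.mp h
    rcases c with j | j
    · refine ⟨-j, ?_⟩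
      rw [inv_a, a_mul_xa, xa_mul_a]
      congr 1; ring
    · refine ⟨j - i, ?_⟩
      rw [inv_xa, xa_mul_xa, a_mul_xa]
      congr 1; ring
  · rintro ⟨j, rfl⟩
    refine isConj_iff.mpr ⟨a (-j), ?_⟩
    rw [inv_a, a_mul_xa, xa_mul_a]
    congr 1; ring

lemma mk_a_eq_mk_a_iff {i j : ZMod (2 * m)} :
    ConjClasses.mk (a i) = ConjClasses.mk (a j) ↔ j = i ∨ j = -i := by
  rw [ConjClasses.mk_eq_mk_iff_isConj, isConj_a_iff, a.injEq, a.injEq]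

lemma mk_a_ne_mk_xa (i j : ZMod (2 * m)) : ConjClasses.mk (a i) ≠ ConjClasses.mk (xa j) := by
  rw [Ne, ConjClasses.mk_eq_mk_iff_isConj, isConj_a_iff]
  simp

lemma mk_xa_eq_mk_xa_iff {i j : ZMod (2 * m)} :
    ConjClasses.mk (xa i) = ConjClasses.mk (xa j) ↔ ∃ k, j = i + 2 * k := by
  rw [ConjClasses.mk_eq_mk_iff_isConj, isConj_xa_iff]
  simp only [xa.injEq]

lemma commute_a_of_two_mul_eq_zero {i : ZMod (2 * m)} (hi : 2 * i = 0) (g : QuaternionGroup m) :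
    Commute (a i) g := by
  rcases g with j | j
  · exact congrArg a (add_comm i j)
  · show a i * xa j = xa j * a i
    rw [a_mul_xa, xa_mul_a]
    congr 1; linear_combination -hi

lemma isRatElem_a_of_four_mul_eq_zero {i : ZMod (2 * m)} (hi : 4 * i = 0) : IsRatElem (a i) := by
  refine isRatElem_of_mul_self_eq_central (z := a (2 * i))
    (commute_a_of_two_mul_eq_zero (by linear_combination hi))
    (by rw [a_mul_a]; exact congrArg a (two_mul i).symm) ?_
  rw [a_mul_a, isConj_a_iff]
  right; congr 1; linear_combination hi

lemma isRatElem_xa (hm : Even m) (i : ZMod (2 * m)) : IsRatElem (xa i) := by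
  obtain ⟨k, hk⟩ := hm
  have hmk : (m : ZMod (2 * m)) = 2 * k :=
    calc (m : ZMod (2 * m)) = ((k + k : ℕ) : ZMod (2 * m)) := congrArg Nat.cast hk
      _ = 2 * k := by push_cast; ring
  refine isRatElem_of_mul_self_eq_central (z := a m)
    (commute_a_of_two_mul_eq_zero (by linear_combination ZMod.natCast_add_natCast_self m))
    (by rw [xa_mul_xa, add_sub_cancel_right]) ?_
  rw [xa_mul_a, isConj_xa_iff, hmk]
  exact ⟨k, rfl⟩

lemma eq_of_four_mul_eq_zero [NeZero m] {k : ℕ} (hk : m = 2 * k) {i : ZMod (2 * m)}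
    (hi : 4 * i = 0) : i = 0 ∨ i = k ∨ i = m ∨ i = -k := by
  obtain ⟨v, hv, rfl⟩ : ∃ v < 2 * m, (v : ZMod (2 * m)) = i :=
    ⟨i.val, ZMod.val_lt i, ZMod.natCast_zmod_val i⟩
  have hval : 2 * m ∣ 4 * v := by
    rw [← ZMod.natCast_eq_zero_iff]; push_cast; exact hi
  rw [hk, ← mul_assoc] at hval
  obtain ⟨t, rfl⟩ := Nat.dvd_of_mul_dvd_mul_left four_pos hval
  have ht4 : t < 4 := by nlinarith
  interval_cases t
  · simp
  · simp
  · simp [hk, mul_comm]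
  · right; right; right
    have := ZMod.natCast_add_natCast_self m
    rw [hk] at this ⊢
    push_cast at this ⊢
    linear_combination this

section StdRep

variable [NeZero m]

local notation "ψ" => (ZMod.stdAddChar : AddChar (ZMod (2 * m)) ℂ)

lemma sum_univ {M : Type*} [AddCommMonoid M] (f : QuaternionGroup m → M) :
    ∑ g, f g = ∑ i, f (a i) + ∑ i, f (xa i) := by
  let e : ZMod (2 * m) ⊕ ZMod (2 * m) ≃ QuaternionGroup m :=
    { toFun := Sum.elim a xa
      invFun := fun | a i => .inl i | xa i => .inr i
      left_inv := by rintro (i | i) <;> rfl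
      right_inv := by rintro (i | i) <;> rfl }
  rw [← Fintype.sum_equiv e (Sum.elim (f ∘ a) (f ∘ xa)) f (by rintro (i | i) <;> rfl),
    Fintype.sum_sum_type]
  rfl

noncomputable def stdMatrix : QuaternionGroup m →* Matrix (Fin 2) (Fin 2) ℂ where
  toFun
    | a i => !![ψ i, 0; 0, ψ (-i)]
    | xa i => !![0, ψ (-i); -ψ i, 0]
  map_one' := by
    rw [one_def]
    simp [Matrix.one_fin_two]
  map_mul' := by
    rintro (i | i) (j | j) <;>
      simp only [a_mul_a, a_mul_xa, xa_mul_a, xa_mul_xa, Matrix.mul_fin_two,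
        ← AddChar.map_add_eq_mul, mul_zero, zero_mul, add_zero, zero_add, mul_neg, neg_mul,
        neg_zero]
    · ring_nf
    · ring_nf
    · ring_nf
    · rw [show -((m : ZMod (2 * m)) + j - i) = m + (i - j) by
          linear_combination -ZMod.natCast_add_natCast_self m,
        show (m : ZMod (2 * m)) + j - i = m + (j - i) by ring,
        AddChar.map_add_eq_mul, AddChar.map_add_eq_mul, ZMod.stdAddChar_natCast_self m]
      ring_nf

noncomputable def stdRep : Representation ℂ (QuaternionGroup m) (Fin 2 → ℂ) :=
  (Matrix.toLinAlgEquiv' : Matrix (Fin 2) (Fin 2) ℂ ≃ₐ[ℂ] _).toMonoidHom.comp stdMatrix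

lemma character_stdRep (g : QuaternionGroup m) :
    (FDRep.of stdRep).character g = (stdMatrix g).trace :=
  Matrix.trace_toLin'_eq _

lemma character_stdRep_a (i : ZMod (2 * m)) :
    (FDRep.of stdRep).character (a i) = ψ i + ψ (-i) := by
  simp [character_stdRep, stdMatrix, Matrix.trace_fin_two]

lemma character_stdRep_xa (i : ZMod (2 * m)) : (FDRep.of stdRep).character (xa i) = 0 := by
  simp [character_stdRep, stdMatrix, Matrix.trace_fin_two]

/-- The character has norm one: `χ (a i) χ (a i)⁻¹ = ψ(i)² + ψ(-i)² + 2`, and `∑ ψ(i)² = 0`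
because `ψ² ≠ 1` once `m ≥ 2`. -/
lemma simple_stdRep (hm : 2 ≤ m) : Simple (FDRep.of (stdRep (m := m))) := by
  have hψ2 : ψ ^ 2 ≠ 1 := by
    refine AddChar.ne_one_iff.mpr ⟨1, ?_⟩
    rw [AddChar.pow_apply, ← AddChar.map_nsmul_eq_pow, Ne, ZMod.stdAddChar_eq_one_iff,
      nsmul_eq_mul, mul_one, ← Nat.cast_ofNat]
    exact ZMod.natCast_ne_zero_of_lt two_ne_zero (by omega)
  have hsum : ∑ i, ψ i ^ 2 = 0 := AddChar.sum_eq_zero_of_ne_one hψ2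
  have hsum_neg : ∑ i, ψ (-i) ^ 2 = 0 := by
    rw [← hsum]; exact Fintype.sum_equiv (Equiv.neg _) _ _ fun _ => rfl
  have hterm : ∀ i, (ψ i + ψ (-i)) * (ψ (-i) + ψ (- -i)) = ψ i ^ 2 + ψ (-i) ^ 2 + 2 := by
    intro i
    have h1 : ψ i * ψ (-i) = 1 := by
      rw [← AddChar.map_add_eq_mul, add_neg_cancel, AddChar.map_zero_eq_one]
    rw [neg_neg]
    linear_combination 2 * h1
  rw [FDRep.simple_iff_char_is_norm_one, sum_univ, Nat.card_eq_fintype_card, card]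
  simp only [inv_a, inv_xa, character_stdRep_a, character_stdRep_xa, mul_zero,
    Finset.sum_const_zero, add_zero, hterm, Finset.sum_add_distrib, hsum, hsum_neg,
    Finset.sum_const, Finset.card_univ, ZMod.card]
  push_cast
  ring

theorem isRatElem_a_iff {n : ℕ} (hm : 2 * m = 2 ^ n) (hm2 : 2 ≤ m) {i : ZMod (2 * m)} :
    IsRatElem (a i) ↔ 4 * i = 0 := by
  refine ⟨fun h => ?_, isRatElem_a_of_four_mul_eq_zero⟩
  by_contra hi
  obtain ⟨q, hq⟩ := h _ ⟨_, simple_stdRep hm2, fun _ => rfl⟩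
  rw [character_stdRep_a, AddChar.map_neg_eq_inv] at hq
  have hdvd : orderOf (ψ i) ∣ 2 ^ n := by
    rw [ZMod.orderOf_stdAddChar_dvd_iff, ← hm, ZMod.natCast_self, zero_mul]
  have hndvd : ¬ orderOf (ψ i) ∣ 4 := by
    rwa [ZMod.orderOf_stdAddChar_dvd_iff, Nat.cast_ofNat]
  exact (IsPrimitiveRoot.orderOf (ψ i)).add_inv_ne_ratCast
    (Nat.two_lt_totient_of_dvd_two_pow hdvd hndvd) q hq

end StdRep

def rationalClasses (m k : ℕ) : List (ConjClasses (QuaternionGroup m)) :=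
  [.mk 1, .mk (a k), .mk (a m), .mk (xa 0), .mk (xa 1)]

theorem isRatClass_iff_mem_rationalClasses {n k : ℕ} (hm : 2 * m = 2 ^ n) (hk : m = 2 * k)
    (c : ConjClasses (QuaternionGroup m)) : IsRatClass c ↔ c ∈ rationalClasses m k := by
  have : NeZero m := ⟨by rintro rfl; exact pow_ne_zero n two_ne_zero hm.symm⟩
  have hm2 : 2 ≤ m := by have := NeZero.ne m; omega
  have h4k : 4 * (k : ZMod (2 * m)) = 0 := by
    rw [← ZMod.natCast_add_natCast_self m, hk]; push_cast; ring
  refine ⟨fun hc => ?_, ?_⟩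
  · obtain ⟨g, rfl⟩ := ConjClasses.mk_surjective c
    rw [isRatClass_mk_iff] at hc
    rcases g with i | i
    · rcases eq_of_four_mul_eq_zero hk ((isRatElem_a_iff hm hm2).mp hc) with rfl | rfl | rfl | rfl
      · simp [rationalClasses]
      · simp [rationalClasses]
      · simp [rationalClasses]
      · simp [rationalClasses, mk_a_eq_mk_a_iff]
    · obtain ⟨j, rfl | rfl⟩ := ZMod.exists_eq_two_mul_or_eq_two_mul_add_one i
      · have : ConjClasses.mk (xa 0) = .mk (xa (2 * j)) :=
          mk_xa_eq_mk_xa_iff.mpr ⟨j, (zero_add _).symm⟩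
        simp [rationalClasses, ← this]
      · have : ConjClasses.mk (xa 1) = .mk (xa (2 * j + 1)) :=
          mk_xa_eq_mk_xa_iff.mpr ⟨j, add_comm _ _⟩
        simp [rationalClasses, ← this]
  · simp only [rationalClasses, List.mem_cons, List.not_mem_nil, or_false]
    rintro (rfl | rfl | rfl | rfl | rfl) <;> rw [isRatClass_mk_iff]
    · exact isRatElem_a_of_four_mul_eq_zero (i := 0) (mul_zero 4)
    · exact isRatElem_a_of_four_mul_eq_zero h4k
    · exact isRatElem_a_of_four_mul_eq_zero
        (by linear_combination 2 * ZMod.natCast_add_natCast_self m)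
    · exact isRatElem_xa ⟨k, by omega⟩ 0
    · exact isRatElem_xa ⟨k, by omega⟩ 1

lemma nodup_rationalClasses {k : ℕ} (hk : m = 2 * k) (hk0 : k ≠ 0) :
    (rationalClasses m k).Nodup := by
  have hne {l : ℕ} (hl0 : l ≠ 0) (hl : l < 2 * m) : (l : ZMod (2 * m)) ≠ 0 :=
    ZMod.natCast_ne_zero_of_lt hl0 hl
  simp only [rationalClasses, ← a_zero, List.nodup_cons, List.mem_cons, List.not_mem_nil,
    List.nodup_nil, mk_a_eq_mk_a_iff, mk_a_ne_mk_xa, mk_xa_eq_mk_xa_iff, neg_zero, zero_add,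
    or_self, or_false, not_or, not_exists, not_false_eq_true, and_self, and_true, true_and]
  refine ⟨⟨hne hk0 (by omega), hne (l := m) (by omega) (by omega)⟩,
    ⟨fun e => ?_, fun e => ?_⟩, ZMod.one_ne_two_mul⟩
  · have hm : (m : ZMod (2 * m)) = k + k := by rw [← Nat.cast_add]; congr 1; omega
    exact hne hk0 (by omega) (by linear_combination e - hm)
  · exact hne (l := m + k) (by omega) (by omega) (by push_cast; linear_combination e)

end QuaternionGroup

open QuaternionGroup in
/-- For `n ≥ 2`, the generalized quaternion group of order `2 ^ (n + 1)` has exactly 5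
rational conjugacy classes. -/
theorem quaternion_five_rational_classes (n : ℕ) (hn : 2 ≤ n) :
    Nat.card {c : ConjClasses (QuaternionGroup (2 ^ (n - 1))) // IsRatClass c} = 5 := by
  have hm : 2 * 2 ^ (n - 1) = 2 ^ n := by rw [← pow_succ']; congr 1; omega
  have hk : 2 ^ (n - 1) = 2 * 2 ^ (n - 2) := by rw [← pow_succ']; congr 1; omega
  rw [Nat.card_congr (Equiv.subtypeEquivRight fun c =>
      (isRatClass_iff_mem_rationalClasses hm hk c).trans List.mem_toFinset.symm),
    Nat.card_eq_finsetCard,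
    List.toFinset_card_of_nodup (nodup_rationalClasses hk (by positivity))]
  rfl
end
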